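/- arXiv:2002.11874 — 2 statements merged into one kernel-verified Lean document; each statement's English description precedes it below -/
import Mathlib

section
/- For all Q-functions Q₁, Q₂ : S → A → ℝ, the local γ-Reward (Bellman optimality) operator C satisfies max_{s∈S, a∈A} |C(Q₁)(s,a) − C(Q₂)(s,a)| ≤ γ' · max_{s∈S, a∈A} |Q₁(s,a) − Q₂(s,a)|; that is, C is a contraction with Lipschitz constant γ' in the sup norm. -/
/-- The local γ-Reward (Bellman optimality) operator is a contraction with
Lipschitz constant `γ'` in the sup norm. -/
theorem gammaReward_operator_contraction
    {S A : Type*} [Fintype S] [Fintype A] [Nonempty S] [Nonempty A]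
    (p : S → A → S → ℝ)
    (hp_nonneg : ∀ s a s', 0 ≤ p s a s')
    (hp_sum : ∀ s a, ∑ s', p s a s' = 1)
    (r : S → A → ℝ) (γ' : ℝ) (hγ0 : 0 ≤ γ') (hγ1 : γ' < 1)
    (C : (S → A → ℝ) → (S → A → ℝ))
    (hC : ∀ Q s a, C Q s a =
      r s a + γ' * ∑ s', p s a s' *
        Finset.univ.sup' Finset.univ_nonempty (fun a' => Q s' a'))
    (Q₁ Q₂ : S → A → ℝ) :
    Finset.univ.sup' Finset.univ_nonempty
      (fun sa : S × A => |C Q₁ sa.1 sa.2 - C Q₂ sa.1 sa.2|) ≤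
    γ' * Finset.univ.sup' Finset.univ_nonempty
      (fun sa : S × A => |Q₁ sa.1 sa.2 - Q₂ sa.1 sa.2|) := by
  set M := Finset.univ.sup' Finset.univ_nonempty
      (fun sa : S × A => |Q₁ sa.1 sa.2 - Q₂ sa.1 sa.2|) with hM
  have hbound : ∀ s' a', |Q₁ s' a' - Q₂ s' a'| ≤ M := fun s' a' =>
    Finset.le_sup' (f := fun sa : S × A => |Q₁ sa.1 sa.2 - Q₂ sa.1 sa.2|)
      (Finset.mem_univ (s', a'))
  have hsup : ∀ s' : S,
      |Finset.univ.sup' Finset.univ_nonempty (fun a' => Q₁ s' a') -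
       Finset.univ.sup' Finset.univ_nonempty (fun a' => Q₂ s' a')| ≤ M := by
    intro s'
    rw [abs_sub_le_iff]
    constructor <;>
    · refine sub_le_iff_le_add.mpr (Finset.sup'_le _ _ fun a' _ => ?_)
      have h := hbound s' a'
      have h2 : Finset.univ.sup' Finset.univ_nonempty (fun a' => Q₂ s' a') ≥ Q₂ s' a' :=
        Finset.le_sup' _ (Finset.mem_univ a')
      have h1 : Finset.univ.sup' Finset.univ_nonempty (fun a' => Q₁ s' a') ≥ Q₁ s' a' :=
        Finset.le_sup' _ (Finset.mem_univ a')
      rw [abs_sub_le_iff] at h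
      linarith [h.1, h.2]
  apply Finset.sup'_le
  rintro ⟨s, a⟩ -
  simp only [hC]
  rw [show ∀ x y z : ℝ, x + γ' * y - (x + γ' * z) = γ' * (y - z) from fun _ _ _ => by ring,
    abs_mul, abs_of_nonneg hγ0, ← Finset.sum_sub_distrib]
  refine mul_le_mul_of_nonneg_left ?_ hγ0
  calc |∑ s', (p s a s' * _ - p s a s' * _)| ≤ ∑ s', |p s a s' *
          (Finset.univ.sup' Finset.univ_nonempty (fun a' => Q₁ s' a') -
           Finset.univ.sup' Finset.univ_nonempty (fun a' => Q₂ s' a'))| := by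
        simp_rw [← mul_sub]
        exact Finset.abs_sum_le_sum_abs _ _
    _ ≤ ∑ s', p s a s' * M := by
        refine Finset.sum_le_sum fun s' _ => ?_
        rw [abs_mul, abs_of_nonneg (hp_nonneg s a s')]
        exact mul_le_mul_of_nonneg_left (hsup s') (hp_nonneg s a s')
    _ = M := by rw [← Finset.sum_mul, hp_sum, one_mul]
end

section
/- Let C₁ and C₂ be two local γ-Reward (Bellman optimality) operators built from the same transition kernel p and the same discount rate γ' ∈ [0,1) but from reward functions r₁ and r₂ respectively, and let Q₁* and Q₂* be their unique fixed points. If max_{s∈S, a∈A} |r₁(s,a) − r₂(s,a)| ≤ ε, then ‖Q₁* − Q₂*‖∞ ≤ ε / (1 − γ'). In particular, if the amended reward satisfies ‖r₂ − r₁‖∞ ≤ γ · ‖r₁‖∞ (as produced by the γ-Reward amendment with spatial discount rate γ), then the optimal Q-function under the amended reward differs from the one under the raw reward by at most γ · ‖r₁‖∞ / (1 − γ') in sup norm. -/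
open Finset

lemma gammaReward_aux
    {S A : Type*} [Fintype S] [Fintype A] [Nonempty S] [Nonempty A]
    (p : S → A → S → ℝ)
    (hp_nonneg : ∀ s a s', 0 ≤ p s a s')
    (hp_sum : ∀ s a, ∑ s', p s a s' = 1)
    (γ' : ℝ) (hγ'0 : 0 ≤ γ') (hγ'1 : γ' < 1)
    (r₁ r₂ : S → A → ℝ)
    (Q₁star Q₂star : S → A → ℝ)
    (hfix₁ : ∀ s a, r₁ s a + γ' * ∑ s', p s a s' *
        univ.sup' univ_nonempty (fun a' => Q₁star s' a') = Q₁star s a)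
    (hfix₂ : ∀ s a, r₂ s a + γ' * ∑ s', p s a s' *
        univ.sup' univ_nonempty (fun a' => Q₂star s' a') = Q₂star s a)
    (ε : ℝ)
    (hε : univ.sup' univ_nonempty
      (fun sa : S × A => |r₁ sa.1 sa.2 - r₂ sa.1 sa.2|) ≤ ε) :
    univ.sup' univ_nonempty
      (fun sa : S × A => |Q₁star sa.1 sa.2 - Q₂star sa.1 sa.2|) ≤ ε / (1 - γ') := by
  set M := univ.sup' univ_nonempty
      (fun sa : S × A => |Q₁star sa.1 sa.2 - Q₂star sa.1 sa.2|) with hM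
  have hMle : ∀ s a, |Q₁star s a - Q₂star s a| ≤ M := fun s a =>
    le_sup' (f := fun sa : S × A => |Q₁star sa.1 sa.2 - Q₂star sa.1 sa.2|) (mem_univ (s, a))
  have hdiff : ∀ s', |univ.sup' univ_nonempty (fun a' => Q₁star s' a') -
      univ.sup' univ_nonempty (fun a' => Q₂star s' a')| ≤ M := by
    intro s'
    rw [abs_sub_le_iff]
    constructor
    · rw [sub_le_iff_le_add]
      apply Finset.sup'_le; intro a _
      have h := abs_le.mp (hMle s' a)
      have h2 : Q₂star s' a ≤ univ.sup' univ_nonempty (fun a' => Q₂star s' a') :=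
        le_sup' _ (mem_univ a)
      linarith [h.2]
    · rw [sub_le_iff_le_add]
      apply Finset.sup'_le; intro a _
      have h := abs_le.mp (hMle s' a)
      have h2 : Q₁star s' a ≤ univ.sup' univ_nonempty (fun a' => Q₁star s' a') :=
        le_sup' _ (mem_univ a)
      linarith [h.1]
  obtain ⟨sa, _, hsa⟩ := exists_mem_eq_sup' (univ_nonempty)
      (fun sa : S × A => |Q₁star sa.1 sa.2 - Q₂star sa.1 sa.2|)
  obtain ⟨s, a⟩ := sa
  have hr : |r₁ s a - r₂ s a| ≤ ε :=
    le_trans (le_sup' (f := fun sa : S × A => |r₁ sa.1 sa.2 - r₂ sa.1 sa.2|)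
      (mem_univ (s, a))) hε
  have hdec : Q₁star s a - Q₂star s a = (r₁ s a - r₂ s a) +
      γ' * ∑ s', p s a s' *
        (univ.sup' univ_nonempty (fun a' => Q₁star s' a') -
         univ.sup' univ_nonempty (fun a' => Q₂star s' a')) := by
    rw [← hfix₁ s a, ← hfix₂ s a]
    rw [Finset.sum_congr rfl (fun s' _ => mul_sub (p s a s') _ _),
      Finset.sum_sub_distrib]
    ring
  have hMeq : M = |Q₁star s a - Q₂star s a| := hsa
  have key : |Q₁star s a - Q₂star s a| ≤ ε + γ' * M := by
    rw [hdec]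
    calc |(r₁ s a - r₂ s a) + γ' * ∑ s', p s a s' *
          (univ.sup' univ_nonempty (fun a' => Q₁star s' a') -
           univ.sup' univ_nonempty (fun a' => Q₂star s' a'))|
        ≤ |r₁ s a - r₂ s a| + γ' * |∑ s', p s a s' *
          (univ.sup' univ_nonempty (fun a' => Q₁star s' a') -
           univ.sup' univ_nonempty (fun a' => Q₂star s' a'))| := by
          refine (abs_add_le _ _).trans ?_
          rw [abs_mul, abs_of_nonneg hγ'0]
      _ ≤ ε + γ' * M := by
          gcongr
          refine (Finset.abs_sum_le_sum_abs _ _).trans ?_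
          calc ∑ s', |p s a s' *
                (univ.sup' univ_nonempty (fun a' => Q₁star s' a') -
                 univ.sup' univ_nonempty (fun a' => Q₂star s' a'))|
              ≤ ∑ s', p s a s' * M := by
                apply Finset.sum_le_sum
                intro s' _
                rw [abs_mul, abs_of_nonneg (hp_nonneg s a s')]
                exact mul_le_mul_of_nonneg_left (hdiff s') (hp_nonneg s a s')
            _ = M := by rw [← Finset.sum_mul, hp_sum, one_mul]
  have hineq : M ≤ ε + γ' * M := by linarith
  rw [le_div_iff₀ (by linarith)]
  nlinarith

/-- If the two reward functions `r₁` and `r₂` differ by at most `ε` in sup norm,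
then the fixed points `Q₁*`, `Q₂*` of the corresponding local γ-Reward (Bellman
optimality) operators (same kernel `p`, same discount `γ'`) differ by at most
`ε / (1 − γ')` in sup norm.  In particular, if the amended reward satisfies
`‖r₂ − r₁‖∞ ≤ γ ⬝ ‖r₁‖∞` (as produced by the γ-Reward amendment with spatial
discount rate `γ`), then `‖Q₁* − Q₂*‖∞ ≤ γ ⬝ ‖r₁‖∞ / (1 − γ')`. -/
theorem gammaReward_fixed_point_perturbation
    {S A : Type*} [Fintype S] [Fintype A] [Nonempty S] [Nonempty A]
    (p : S → A → S → ℝ)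
    (hp_nonneg : ∀ s a s', 0 ≤ p s a s')
    (hp_sum : ∀ s a, ∑ s', p s a s' = 1)
    (γ' : ℝ) (hγ'0 : 0 ≤ γ') (hγ'1 : γ' < 1)
    (γ : ℝ) (hγ0 : 0 ≤ γ) (hγ1 : γ ≤ 1)
    (r₁ r₂ : S → A → ℝ)
    (C₁ C₂ : (S → A → ℝ) → (S → A → ℝ))
    (hC₁ : ∀ Q s a, C₁ Q s a =
      r₁ s a + γ' * ∑ s', p s a s' *
        Finset.univ.sup' Finset.univ_nonempty (fun a' => Q s' a'))
    (hC₂ : ∀ Q s a, C₂ Q s a =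
      r₂ s a + γ' * ∑ s', p s a s' *
        Finset.univ.sup' Finset.univ_nonempty (fun a' => Q s' a'))
    (Q₁star Q₂star : S → A → ℝ)
    (hfix₁ : C₁ Q₁star = Q₁star) (hfix₂ : C₂ Q₂star = Q₂star)
    (huniq₁ : ∀ Q : S → A → ℝ, C₁ Q = Q → Q = Q₁star)
    (huniq₂ : ∀ Q : S → A → ℝ, C₂ Q = Q → Q = Q₂star)
    (ε : ℝ)
    (hε : Finset.univ.sup' Finset.univ_nonempty
      (fun sa : S × A => |r₁ sa.1 sa.2 - r₂ sa.1 sa.2|) ≤ ε) :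
    Finset.univ.sup' Finset.univ_nonempty
      (fun sa : S × A => |Q₁star sa.1 sa.2 - Q₂star sa.1 sa.2|) ≤ ε / (1 - γ') ∧
    (Finset.univ.sup' Finset.univ_nonempty
        (fun sa : S × A => |r₂ sa.1 sa.2 - r₁ sa.1 sa.2|) ≤
      γ * Finset.univ.sup' Finset.univ_nonempty
        (fun sa : S × A => |r₁ sa.1 sa.2|) →
      Finset.univ.sup' Finset.univ_nonempty
        (fun sa : S × A => |Q₁star sa.1 sa.2 - Q₂star sa.1 sa.2|) ≤
      γ * Finset.univ.sup' Finset.univ_nonempty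
        (fun sa : S × A => |r₁ sa.1 sa.2|) / (1 - γ')) := by
  have hf₁ : ∀ s a, r₁ s a + γ' * ∑ s', p s a s' *
      univ.sup' univ_nonempty (fun a' => Q₁star s' a') = Q₁star s a := by
    intro s a; rw [← hC₁ Q₁star s a, hfix₁]
  have hf₂ : ∀ s a, r₂ s a + γ' * ∑ s', p s a s' *
      univ.sup' univ_nonempty (fun a' => Q₂star s' a') = Q₂star s a := by
    intro s a; rw [← hC₂ Q₂star s a, hfix₂]
  constructor
  · exact gammaReward_aux p hp_nonneg hp_sum γ' hγ'0 hγ'1 r₁ r₂ Q₁star Q₂star hf₁ hf₂ ε hε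
  · intro h
    apply gammaReward_aux p hp_nonneg hp_sum γ' hγ'0 hγ'1 r₁ r₂ Q₁star Q₂star hf₁ hf₂
    simpa [abs_sub_comm] using h
end
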